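/- arXiv:2209.15203 — 2 statements merged into one kernel-verified Lean document; each statement's English description precedes it below -/
import Mathlib

section
/- (Lemma 3.) Let (Ω, ℱ, ℙ) be a probability space and let the stochastic gradients g_t^q : Ω → ℝ^d be random vectors, so that the bidirectional compressed SGD iterates w_t, w̃_t are random vectors defined pathwise. Assume: (i) the compressor C satisfies ‖C(x) − x‖₂² ≤ (1 − γ)‖x‖₂² for all x ∈ ℝ^d with γ ∈ (0,1); (ii) almost surely, for every t ≥ 1, ‖C(δ_{t−1} + Σ_q p_q a_t^q) − C(δ_{t−1} + Σ_q p_q C(a_t^q))‖₂ ≤ ρ ‖α_{t−1} Σ_q p_q g_{t−1}^q‖₂ for some ρ > 0; (iii) E[‖Σ_{q=1}^N p_q g_t^q‖₂²] ≤ M for all t ≥ 0; (iv) the step sizes satisfy α_t > 0 and, for some λ > 0 and D > 0, (1/(1 − γ)) Σ_{i=1}^t ((1 + λ)(1 − γ))^i α_{t−i}²/α_t ≤ D for every t ≥ 1. Then for every t ≥ 1, E[‖w_t − w̃_t‖₂²] ≤ (M/λ)(√(1 − γ) + ρ)² α_t D. -/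
/-!
The gap `e_t = w_t - w̃_t = ∑ p_q ε_t^q + δ_t` satisfies `e_{t+1} = x - C(G_{t+1})` with
`x = e_t + α_t ∑ p_q g_t^q`. Passing through `C x`, the compressor bound and the gap assumption give
`‖e_{t+1}‖ ≤ √(1-γ) ‖e_t‖ + (√(1-γ) + ρ) ‖α_t ∑ p_q g_t^q‖`. Young's inequality with weight `λ`
and taking expectations yield the linear recursion
`E‖e_{t+1}‖² ≤ (1+λ)(1-γ) E‖e_t‖² + (1+1/λ)(√(1-γ)+ρ)² α_t² M`, whose unrolled geometric sum is
exactly what the step-size condition controls.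
-/

open Finset MeasureTheory

theorem add_sq_le_one_add_mul_sq_add_one_add_inv_mul_sq {a b lam : ℝ} (hlam : 0 < lam) :
    (a + b) ^ 2 ≤ (1 + lam) * a ^ 2 + (1 + 1 / lam) * b ^ 2 := by
  have hdiff : (1 + lam) * a ^ 2 + (1 + 1 / lam) * b ^ 2 - (a + b) ^ 2 =
      (lam * a - b) ^ 2 / lam := by
    field_simp
    ring
  have : 0 ≤ (lam * a - b) ^ 2 / lam := by positivity
  linarith

theorem norm_compress_sub_le_sqrt_mul_norm {E : Type*} [SeminormedAddCommGroup E] {C : E → E}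
    {c : ℝ} (hC : ∀ x, ‖C x - x‖ ^ 2 ≤ c * ‖x‖ ^ 2) (x : E) : ‖C x - x‖ ≤ √c * ‖x‖ := by
  rw [← Real.sqrt_sq (norm_nonneg x), ← Real.sqrt_mul' c (sq_nonneg _)]
  exact Real.le_sqrt_of_sq_le (hC x)

theorem sq_norm_add_sub_compress_le {E : Type*} [SeminormedAddCommGroup E] {C : E → E}
    {c ρ lam : ℝ} (hc : 0 ≤ c) (hlam : 0 < lam) (hC : ∀ x, ‖C x - x‖ ^ 2 ≤ c * ‖x‖ ^ 2)
    (e v y : E) (hCy : ‖C (e + v) - C y‖ ≤ ρ * ‖v‖) :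
    ‖e + v - C y‖ ^ 2 ≤ (1 + lam) * c * ‖e‖ ^ 2 + (1 + 1 / lam) * (√c + ρ) ^ 2 * ‖v‖ ^ 2 := by
  have hnorm : ‖e + v - C y‖ ≤ √c * ‖e‖ + (√c + ρ) * ‖v‖ :=
    calc ‖e + v - C y‖ ≤ ‖C (e + v) - (e + v)‖ + ‖C (e + v) - C y‖ := by
          rw [norm_sub_rev (C (e + v))]; exact norm_sub_le_norm_sub_add_norm_sub _ _ _
      _ ≤ √c * (‖e‖ + ‖v‖) + ρ * ‖v‖ := by
          gcongr
          exact (norm_compress_sub_le_sqrt_mul_norm hC _).trans (by gcongr; exact norm_add_le e v)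
      _ = √c * ‖e‖ + (√c + ρ) * ‖v‖ := by ring
  calc ‖e + v - C y‖ ^ 2 ≤ (√c * ‖e‖ + (√c + ρ) * ‖v‖) ^ 2 := by gcongr
    _ ≤ (1 + lam) * (√c * ‖e‖) ^ 2 + (1 + 1 / lam) * ((√c + ρ) * ‖v‖) ^ 2 :=
        add_sq_le_one_add_mul_sq_add_one_add_inv_mul_sq hlam
    _ = _ := by rw [mul_pow, mul_pow, Real.sq_sqrt hc]; ring

theorem le_sum_range_pow_mul_of_le_mul_add {u b : ℕ → ℝ} {K : ℝ} (hK : 0 ≤ K) (h0 : u 0 ≤ 0)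
    (hu : ∀ s, u (s + 1) ≤ K * u s + b s) (t : ℕ) :
    u t ≤ ∑ i ∈ range t, K ^ i * b (t - 1 - i) := by
  induction t with
  | zero => simpa using h0
  | succ t ih =>
    calc u (t + 1) ≤ K * u t + b t := hu t
      _ ≤ K * ∑ i ∈ range t, K ^ i * b (t - 1 - i) + b t := by gcongr
      _ = ∑ i ∈ range (t + 1), K ^ i * b (t + 1 - 1 - i) := by
        rw [sum_range_succ', mul_sum]
        congr 1
        · refine sum_congr rfl fun i _ => ?_
          rw [show t + 1 - 1 - (i + 1) = t - 1 - i by omega, pow_succ]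
          ring
        · simp

theorem sum_Icc_one_pow_mul_eq (K : ℝ) (f : ℕ → ℝ) (t : ℕ) :
    ∑ i ∈ Icc 1 t, K ^ i * f (t - i) = K * ∑ i ∈ range t, K ^ i * f (t - 1 - i) := by
  rw [← Ico_add_one_right_eq_Icc, sum_Ico_eq_sum_range, mul_sum]
  refine sum_congr rfl fun i _ => ?_
  rw [show t - (1 + i) = t - 1 - i by omega, pow_add, pow_one]
  ring

theorem sum_range_pow_mul_sq_le_of_stepsize {α : ℕ → ℝ} {c lam D : ℝ} {t : ℕ} (hc : 0 < c)
    (hlam : 0 < lam) (hαt : 0 < α t)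
    (hstep : (1 / c) * ∑ i ∈ Icc 1 t, ((1 + lam) * c) ^ i * α (t - i) ^ 2 / α t ≤ D) :
    ∑ i ∈ range t, ((1 + lam) * c) ^ i * α (t - 1 - i) ^ 2 ≤ D * α t / (1 + lam) := by
  rw [← sum_div, sum_Icc_one_pow_mul_eq _ (fun j => α j ^ 2)] at hstep
  set S := ∑ i ∈ range t, ((1 + lam) * c) ^ i * α (t - 1 - i) ^ 2
  have hfold : 1 / c * ((1 + lam) * c * S / α t) = (1 + lam) * S / α t := by
    field_simp
  rw [hfold, div_le_iff₀ hαt] at hstep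
  rw [le_div_iff₀ (by linarith)]
  linarith

theorem le_of_le_mul_add_of_stepsize {u α : ℕ → ℝ} {c κ lam D M : ℝ} {t : ℕ} (hc : 0 < c)
    (hlam : 0 < lam) (hκ : 0 ≤ κ) (hM : 0 ≤ M) (hαt : 0 < α t) (h0 : u 0 ≤ 0)
    (hu : ∀ s, u (s + 1) ≤ (1 + lam) * c * u s + (1 + 1 / lam) * κ * α s ^ 2 * M)
    (hstep : (1 / c) * ∑ i ∈ Icc 1 t, ((1 + lam) * c) ^ i * α (t - i) ^ 2 / α t ≤ D) :
    u t ≤ M / lam * κ * α t * D :=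
  calc u t ≤ ∑ i ∈ range t, ((1 + lam) * c) ^ i * ((1 + 1 / lam) * κ * α (t - 1 - i) ^ 2 * M) :=
        le_sum_range_pow_mul_of_le_mul_add (b := fun s => (1 + 1 / lam) * κ * α s ^ 2 * M)
          (by positivity) h0 hu t
    _ = (1 + 1 / lam) * κ * M * ∑ i ∈ range t, ((1 + lam) * c) ^ i * α (t - 1 - i) ^ 2 := by
        rw [mul_sum]; exact sum_congr rfl fun i _ => by ring
    _ ≤ (1 + 1 / lam) * κ * M * (D * α t / (1 + lam)) := by
        gcongr
        exact sum_range_pow_mul_sq_le_of_stepsize hc hlam hαt hstep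
    _ = M / lam * κ * α t * D := by
        field_simp
        ring

theorem integral_le_mul_integral_add_mul_of_ae_le {Ω : Type*} [MeasurableSpace Ω] {μ : Measure Ω}
    {f g h : Ω → ℝ} {a b M : ℝ} (hf : Integrable f μ) (hg : Integrable g μ) (hh : Integrable h μ)
    (hb : 0 ≤ b) (hM : ∫ ω, h ω ∂μ ≤ M) (hle : ∀ᵐ ω ∂μ, f ω ≤ a * g ω + b * h ω) :
    ∫ ω, f ω ∂μ ≤ a * ∫ ω, g ω ∂μ + b * M := by
  calc ∫ ω, f ω ∂μ ≤ ∫ ω, a * g ω + b * h ω ∂μ :=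
        integral_mono_ae hf ((hg.const_mul a).add (hh.const_mul b)) hle
    _ = a * ∫ ω, g ω ∂μ + b * ∫ ω, h ω ∂μ := by
        rw [integral_add (hg.const_mul a) (hh.const_mul b), integral_const_mul, integral_const_mul]
    _ ≤ a * ∫ ω, g ω ∂μ + b * M := by gcongr

theorem bidirectional_expected_gap_bound_general
    {d N : ℕ}
    {Ω : Type*} [MeasurableSpace Ω] (μ : Measure Ω)
    (p : Fin N → ℝ) (α : ℕ → ℝ)
    (C : EuclideanSpace ℝ (Fin d) → EuclideanSpace ℝ (Fin d))
    (g : ℕ → Fin N → Ω → EuclideanSpace ℝ (Fin d))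
    (a ε : ℕ → Fin N → Ω → EuclideanSpace ℝ (Fin d))
    (G δ w wtil : ℕ → Ω → EuclideanSpace ℝ (Fin d))
    -- pathwise definition of the iterates
    (hε0 : ∀ q ω, ε 0 q ω = 0) (hδ0 : ∀ ω, δ 0 ω = 0)
    (ha : ∀ s q ω, a (s + 1) q ω = ε s q ω + α s • g s q ω)
    (hε : ∀ s q ω, ε (s + 1) q ω = a (s + 1) q ω - C (a (s + 1) q ω))
    (hG : ∀ s ω, G (s + 1) ω = ∑ q, p q • C (a (s + 1) q ω) + δ s ω)
    (hδ : ∀ s ω, δ (s + 1) ω = G (s + 1) ω - C (G (s + 1) ω))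
    (hwtil : ∀ s ω, wtil s ω = w s ω - ∑ q, p q • ε s q ω - δ s ω)
    -- measurability and square-integrability of the iterates
    (hsq_gap : ∀ s, Integrable (fun ω => ‖w s ω - wtil s ω‖ ^ 2) μ)
    (hsq_g : ∀ s, Integrable (fun ω => ‖∑ q, p q • g s q ω‖ ^ 2) μ)
    -- (i) γ-approximate compressor
    {γ : ℝ} (hγ1 : γ < 1)
    (hC : ∀ x, ‖C x - x‖ ^ 2 ≤ (1 - γ) * ‖x‖ ^ 2)
    -- (ii) a.s. gap assumption
    {ρ : ℝ}
    (hgap : ∀ᵐ ω ∂μ, ∀ s, ‖C (δ s ω + ∑ q, p q • a (s + 1) q ω) -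
        C (δ s ω + ∑ q, p q • C (a (s + 1) q ω))‖ ≤ ρ * ‖α s • ∑ q, p q • g s q ω‖)
    -- (iii) second-moment bound
    {M : ℝ} (hM : ∀ s, ∫ ω, ‖∑ q, p q • g s q ω‖ ^ 2 ∂μ ≤ M)
    -- (iv) step-size condition
    (hα : ∀ s, 0 < α s) {lam D : ℝ} (hlam : 0 < lam)
    (hstep : ∀ t : ℕ, 1 ≤ t →
      (1 / (1 - γ)) * ∑ i ∈ Icc 1 t, ((1 + lam) * (1 - γ)) ^ i * (α (t - i)) ^ 2 / α t ≤ D) :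
    ∀ t : ℕ, 1 ≤ t →
      ∫ ω, ‖w t ω - wtil t ω‖ ^ 2 ∂μ ≤
        (M / lam) * (Real.sqrt (1 - γ) + ρ) ^ 2 * α t * D := by
  intro t ht
  have hc : 0 < 1 - γ := sub_pos.mpr hγ1
  have hgap_eq : ∀ s ω, w s ω - wtil s ω = ∑ q, p q • ε s q ω + δ s ω := fun s ω => by
    rw [hwtil]; abel
  have hpre : ∀ s ω, δ s ω + ∑ q, p q • a (s + 1) q ω =
      (w s ω - wtil s ω) + α s • ∑ q, p q • g s q ω := fun s ω => by
    simp only [ha, smul_add, sum_add_distrib, smul_sum, smul_comm (α s), hgap_eq]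
    abel
  have hnext : ∀ s ω, w (s + 1) ω - wtil (s + 1) ω =
      (w s ω - wtil s ω) + α s • ∑ q, p q • g s q ω - C (G (s + 1) ω) := fun s ω => by
    rw [← hpre, hgap_eq, hδ, hG]
    simp only [hε, smul_sub, sum_sub_distrib]
    abel
  have hpath : ∀ᵐ ω ∂μ, ∀ s, ‖w (s + 1) ω - wtil (s + 1) ω‖ ^ 2 ≤
      (1 + lam) * (1 - γ) * ‖w s ω - wtil s ω‖ ^ 2 +
        (1 + 1 / lam) * (√(1 - γ) + ρ) ^ 2 * α s ^ 2 * ‖∑ q, p q • g s q ω‖ ^ 2 := by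
    filter_upwards [hgap] with ω hω s
    have hCy := hω s
    rw [hpre, add_comm (δ s ω), ← hG] at hCy
    rw [hnext, mul_assoc _ (α s ^ 2), ← sq_abs (α s), ← mul_pow, ← Real.norm_eq_abs,
      ← norm_smul]
    exact sq_norm_add_sub_compress_le hc.le hlam hC _ _ _ hCy
  have hrec : ∀ s, ∫ ω, ‖w (s + 1) ω - wtil (s + 1) ω‖ ^ 2 ∂μ ≤
      (1 + lam) * (1 - γ) * ∫ ω, ‖w s ω - wtil s ω‖ ^ 2 ∂μ +
        (1 + 1 / lam) * (√(1 - γ) + ρ) ^ 2 * α s ^ 2 * M := fun s =>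
    integral_le_mul_integral_add_mul_of_ae_le (hsq_gap _) (hsq_gap s) (hsq_g s) (by positivity)
      (hM s) (by filter_upwards [hpath] with ω h using h s)
  have h0 : ∫ ω, ‖w 0 ω - wtil 0 ω‖ ^ 2 ∂μ ≤ 0 := by simp [hgap_eq, hε0, hδ0]
  have hM0 : 0 ≤ M := (integral_nonneg fun ω => sq_nonneg _).trans (hM 0)
  exact le_of_le_mul_add_of_stepsize (u := fun s => ∫ ω, ‖w s ω - wtil s ω‖ ^ 2 ∂μ) hc hlam
    (sq_nonneg _) hM0 (hα t) h0 hrec (hstep t ht)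

/-- Lemma 3: expectation bound on the gap between the bidirectional
compressed SGD iterates and the error-corrected iterates:
`E[‖w_t − w̃_t‖²] ≤ (M/λ)(√(1−γ)+ρ)² α_t D` for every `t ≥ 1`. -/
theorem bidirectional_expected_gap_bound
    {d N : ℕ} (hd : 1 ≤ d) (hN : 1 ≤ N)
    {Ω : Type*} [MeasurableSpace Ω] (μ : Measure Ω) [IsProbabilityMeasure μ]
    (p : Fin N → ℝ) (α : ℕ → ℝ)
    (C : EuclideanSpace ℝ (Fin d) → EuclideanSpace ℝ (Fin d))
    (g : ℕ → Fin N → Ω → EuclideanSpace ℝ (Fin d))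
    (w₀ : EuclideanSpace ℝ (Fin d))
    (a ε : ℕ → Fin N → Ω → EuclideanSpace ℝ (Fin d))
    (G δ w wtil : ℕ → Ω → EuclideanSpace ℝ (Fin d))
    -- pathwise definition of the iterates
    (hε0 : ∀ q ω, ε 0 q ω = 0) (hδ0 : ∀ ω, δ 0 ω = 0) (hw0 : ∀ ω, w 0 ω = w₀)
    (ha : ∀ s q ω, a (s + 1) q ω = ε s q ω + α s • g s q ω)
    (hε : ∀ s q ω, ε (s + 1) q ω = a (s + 1) q ω - C (a (s + 1) q ω))
    (hG : ∀ s ω, G (s + 1) ω = ∑ q, p q • C (a (s + 1) q ω) + δ s ω)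
    (hδ : ∀ s ω, δ (s + 1) ω = G (s + 1) ω - C (G (s + 1) ω))
    (hw : ∀ s ω, w (s + 1) ω = w s ω - C (G (s + 1) ω))
    (hwtil : ∀ s ω, wtil s ω = w s ω - ∑ q, p q • ε s q ω - δ s ω)
    -- measurability and square-integrability of the iterates
    (hmeas_w : ∀ s, Measurable (w s)) (hmeas_wtil : ∀ s, Measurable (wtil s))
    (hmeas_g : ∀ s q, Measurable (g s q))
    (hsq_gap : ∀ s, Integrable (fun ω => ‖w s ω - wtil s ω‖ ^ 2) μ)
    (hsq_g : ∀ s, Integrable (fun ω => ‖∑ q, p q • g s q ω‖ ^ 2) μ)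
    -- (i) γ-approximate compressor
    {γ : ℝ} (hγ0 : 0 < γ) (hγ1 : γ < 1)
    (hC : ∀ x, ‖C x - x‖ ^ 2 ≤ (1 - γ) * ‖x‖ ^ 2)
    -- (ii) a.s. gap assumption
    {ρ : ℝ} (hρ : 0 < ρ)
    (hgap : ∀ᵐ ω ∂μ, ∀ s, ‖C (δ s ω + ∑ q, p q • a (s + 1) q ω) -
        C (δ s ω + ∑ q, p q • C (a (s + 1) q ω))‖ ≤ ρ * ‖α s • ∑ q, p q • g s q ω‖)
    -- (iii) second-moment bound
    {M : ℝ} (hM : ∀ s, ∫ ω, ‖∑ q, p q • g s q ω‖ ^ 2 ∂μ ≤ M)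
    -- (iv) step-size condition
    (hα : ∀ s, 0 < α s) {lam D : ℝ} (hlam : 0 < lam) (hD : 0 < D)
    (hstep : ∀ t : ℕ, 1 ≤ t →
      (1 / (1 - γ)) * ∑ i ∈ Icc 1 t, ((1 + lam) * (1 - γ)) ^ i * (α (t - i)) ^ 2 / α t ≤ D) :
    ∀ t : ℕ, 1 ≤ t →
      ∫ ω, ‖w t ω - wtil t ω‖ ^ 2 ∂μ ≤
        (M / lam) * (Real.sqrt (1 - γ) + ρ) ^ 2 * α t * D :=
  bidirectional_expected_gap_bound_general μ p α C g a ε G δ w wtil hε0 hδ0 ha hε hG hδ hwtil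
    hsq_gap hsq_g hγ1 hC hgap hM hα hlam hstep
end

section
/- (Remark after Theorem 1: non-convex convergence of unidirectional top-K SGD.) Let F : ℝ^d → ℝ be differentiable with L-Lipschitz gradient (L > 0) and bounded below by F*. Let (Ω, ℱ, ℙ) be a probability space with a filtration (ℱ_t)_{t≥0}, and let the stochastic gradients g_t^q be random vectors such that the unidirectional compressed SGD iterates w_t, w̃_t (defined pathwise) are ℱ_t-measurable. Assume: (i) the compressor C satisfies ‖C(x) − x‖₂² ≤ (1 − γ)‖x‖₂² for all x ∈ ℝ^d with γ ∈ (0,1); (ii) almost surely, for every t ≥ 1, ‖C(Σ_q p_q a_t^q) − Σ_q p_q C(a_t^q)‖₂ ≤ ρ̂ ‖α_{t−1} Σ_q p_q g_{t−1}^q‖₂ for some ρ̂ > 0; (iii) E[Σ_{q=1}^N p_q g_t^q | ℱ_t] = ∇F(w_t) almost surely and E[‖Σ_{q=1}^N p_q g_t^q‖₂²] ≤ M for all t ≥ 0; (iv) the step sizes satisfy α_t > 0 and, for some λ > 0 and D > 0, (1/(1 − γ)) Σ_{i=1}^t ((1 + λ)(1 − γ))^i α_{t−i}²/α_t ≤ D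 for every t ≥ 1. Then for every T ≥ 0, (1/Σ_{t=0}^T α_t) Σ_{t=0}^T α_t E[‖∇F(w_t)‖₂²] ≤ (2/Σ_{t=0}^T α_t)(F(w_0) − F*) + (L M + L² M D (√(1 − γ) + ρ̂)²/λ) · (Σ_{t=0}^T α_t²)/(Σ_{t=0}^T α_t). -/
open Finset MeasureTheory

open scoped RealInnerProductSpace

/-!
The error-corrected iterate follows plain SGD: `w̃ₜ₊₁ = w̃ₜ - αₜ Gₜ` with `Gₜ = ∑_q p_q gₜ^q`.
Since `w̃ₜ` is `ℱₜ`-measurable and `E[Gₜ | ℱₜ] = ∇F(wₜ)`, the descent lemma for `F` at `w̃ₜ`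
together with `⟪∇F(w̃ₜ), ∇F(wₜ)⟫ ≥ ‖∇F(wₜ)‖²/2 - L²‖wₜ - w̃ₜ‖²/2` gives
`αₜ E‖∇F(wₜ)‖² ≤ 2 (E F(w̃ₜ) - E F(w̃ₜ₊₁)) + L M αₜ² + L² αₜ E‖eₜ‖²`, where `eₜ = wₜ - w̃ₜ`
is the accumulated compression error. By the compressor contraction, the gap assumption and the
Peter–Paul inequality, `E‖eₜ₊₁‖² ≤ (1+λ)(1-γ) E‖eₜ‖² + (1+1/λ)(√(1-γ)+ρ̂)² M αₜ²`; unrolling this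
recursion, the step-size condition yields `E‖eₜ‖² ≤ M D (√(1-γ)+ρ̂)² αₜ / λ`. Summing the
descent inequality over `t` telescopes.
-/

theorem add_sq_le_peter_paul {lam : ℝ} (hlam : 0 < lam) (a b : ℝ) :
    (a + b) ^ 2 ≤ (1 + lam) * a ^ 2 + (1 + lam⁻¹) * b ^ 2 := by
  have key : 0 ≤ (lam * a - b) ^ 2 / lam := by positivity
  have expand : (lam * a - b) ^ 2 / lam = lam * a ^ 2 - 2 * a * b + lam⁻¹ * b ^ 2 := by
    field_simp
    ring
  nlinarith

theorem le_sqrt_mul_of_sq_le_mul_sq {a b c : ℝ} (h : a ^ 2 ≤ c * b ^ 2) (hb : 0 ≤ b) :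
    a ≤ √c * b := by
  have habs := Real.abs_le_sqrt h
  rw [Real.sqrt_mul' _ (sq_nonneg _), Real.sqrt_sq hb] at habs
  exact (le_abs_self a).trans habs

theorem sum_Icc_pow_mul_succ {R : Type*} [CommSemiring R] (r : R) (b : ℕ → R) (t : ℕ) :
    ∑ i ∈ Icc 1 (t + 1), r ^ i * b (t + 1 - i) = r * (b t + ∑ i ∈ Icc 1 t, r ^ i * b (t - i)) := by
  rw [← Ico_add_one_right_eq_Icc, sum_Ico_eq_sum_range, ← Ico_add_one_right_eq_Icc,
    sum_Ico_eq_sum_range, add_tsub_cancel_right, add_tsub_cancel_right, sum_range_succ',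
    mul_add, mul_sum, add_comm (r * b t)]
  congr 1
  · refine sum_congr rfl fun i _ => ?_
    rw [show t + 1 - (1 + (i + 1)) = t - (1 + i) by omega]
    ring
  · simp

theorem mul_le_sum_Icc_of_le_mul_add {r c : ℝ} {e b : ℕ → ℝ} (hr : 0 ≤ r) (he0 : e 0 ≤ 0)
    (hrec : ∀ t, e (t + 1) ≤ r * e t + c * b t) (t : ℕ) :
    r * e t ≤ c * ∑ i ∈ Icc 1 t, r ^ i * b (t - i) := by
  induction t with
  | zero => simpa using mul_nonpos_of_nonneg_of_nonpos hr he0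
  | succ t ih =>
    rw [sum_Icc_pow_mul_succ]
    nlinarith [mul_le_mul_of_nonneg_left (hrec t) hr]

theorem sum_Icc_pow_mul_sq_le_of_step_condition {α : ℕ → ℝ} {r c D : ℝ} (hα : ∀ s, 0 < α s)
    (hc : 0 < c) (hD : 0 ≤ D)
    (hstep : ∀ t, 1 ≤ t → (1 / c) * ∑ i ∈ Icc 1 t, r ^ i * α (t - i) ^ 2 / α t ≤ D) (t : ℕ) :
    ∑ i ∈ Icc 1 t, r ^ i * α (t - i) ^ 2 ≤ D * c * α t := by
  rcases t.eq_zero_or_pos with rfl | ht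
  · simpa using mul_nonneg (mul_nonneg hD hc.le) (hα 0).le
  have h := hstep t ht
  rw [← sum_div, one_div, inv_mul_le_iff₀ hc, div_le_iff₀ (hα t)] at h
  linarith

theorem weighted_average_le_of_descent {α φ Γ : ℕ → ℝ} {B φmin : ℝ} (hα : ∀ t, 0 ≤ α t)
    (hφ : ∀ t, φmin ≤ φ t) (hstep : ∀ t, α t * Γ t ≤ 2 * (φ t - φ (t + 1)) + B * α t ^ 2)
    (n : ℕ) :
    (1 / ∑ t ∈ range n, α t) * ∑ t ∈ range n, α t * Γ t ≤
      (2 / ∑ t ∈ range n, α t) * (φ 0 - φmin) +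
        B * ((∑ t ∈ range n, α t ^ 2) / ∑ t ∈ range n, α t) := by
  have hsum : ∑ t ∈ range n, α t * Γ t ≤ 2 * (φ 0 - φmin) + B * ∑ t ∈ range n, α t ^ 2 := calc
    _ ≤ ∑ t ∈ range n, (2 * (φ t - φ (t + 1)) + B * α t ^ 2) := sum_le_sum fun t _ => hstep t
    _ = 2 * (φ 0 - φ n) + B * ∑ t ∈ range n, α t ^ 2 := by
      rw [sum_add_distrib, ← mul_sum, ← mul_sum, sum_range_sub']
    _ ≤ _ := by linarith [hφ n]
  calc _ ≤ (1 / ∑ t ∈ range n, α t) * (2 * (φ 0 - φmin) + B * ∑ t ∈ range n, α t ^ 2) :=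
        mul_le_mul_of_nonneg_left hsum (one_div_nonneg.2 (sum_nonneg fun t _ => hα t))
    _ = _ := by ring

section LipschitzGradient

variable {E : Type*} [NormedAddCommGroup E] [InnerProductSpace ℝ E] [CompleteSpace E]
  {F : E → ℝ} {L : ℝ}

theorem quadratic_upper_bound_of_lipschitz_gradient (hF : Differentiable ℝ F)
    (hFL : ∀ x y, ‖gradient F x - gradient F y‖ ≤ L * ‖x - y‖) (x y : E) :
    F y ≤ F x + ⟪gradient F x, y - x⟫ + L / 2 * ‖y - x‖ ^ 2 := by
  set u := y - x
  -- `φ` is the gap between the quadratic model and `F` along the segment; it is antitone.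
  set φ : ℝ → ℝ := fun s => F (x + s • u) - s * ⟪gradient F x, u⟫ - L / 2 * s ^ 2 * ‖u‖ ^ 2
  have hφ : ∀ s, HasDerivAt φ
      (⟪gradient F (x + s • u), u⟫ - ⟪gradient F x, u⟫ - L * s * ‖u‖ ^ 2) s := by
    intro s
    have hline : HasDerivAt (fun s : ℝ => x + s • u) u s := by
      simpa using ((hasDerivAt_id s).smul_const u).const_add x
    have hFs := (hasGradientAt_iff_hasFDerivAt.1 (hF (x + s • u)).hasGradientAt).comp_hasDerivAt
      s hline
    refine ((hFs.sub ((hasDerivAt_id s).mul_const ⟪gradient F x, u⟫)).sub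
      (((hasDerivAt_pow 2 s).const_mul (L / 2)).mul_const (‖u‖ ^ 2))).congr_deriv ?_
    simp only [InnerProductSpace.toDual_apply_apply, one_mul, Nat.cast_ofNat]
    ring
  have hanti : AntitoneOn φ (Set.Icc 0 1) := by
    refine antitoneOn_of_hasDerivWithinAt_nonpos (convex_Icc 0 1)
      (fun s _ => (hφ s).continuousAt.continuousWithinAt) (fun s _ => (hφ s).hasDerivWithinAt)
      fun s hs => ?_
    rw [interior_Icc] at hs
    have hlip : ‖gradient F (x + s • u) - gradient F x‖ ≤ L * s * ‖u‖ := by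
      simpa [norm_smul, abs_of_pos hs.1, mul_assoc] using hFL (x + s • u) x
    have := real_inner_le_norm (gradient F (x + s • u) - gradient F x) u
    rw [inner_sub_left] at this
    nlinarith [norm_nonneg u]
  have h01 := hanti (by simp) (by simp) zero_le_one
  simp only [φ, zero_smul, add_zero, one_smul, zero_mul, sub_zero, one_mul, add_sub_cancel,
    ne_eq, OfNat.ofNat_ne_zero, not_false_eq_true, zero_pow, mul_zero, one_pow, u] at h01
  linarith

theorem half_sq_sub_le_inner_gradient
    (hFL : ∀ x y, ‖gradient F x - gradient F y‖ ≤ L * ‖x - y‖) (x y : E) :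
    ‖gradient F y‖ ^ 2 / 2 - L ^ 2 / 2 * ‖y - x‖ ^ 2 ≤ ⟪gradient F x, gradient F y⟫ := by
  have h := pow_le_pow_left₀ (norm_nonneg _) (hFL x y) 2
  rw [norm_sub_rev x] at h
  have := norm_sub_sq_real (gradient F x) (gradient F y)
  nlinarith [sq_nonneg ‖gradient F x‖]

end LipschitzGradient

theorem LipschitzWith.memLp_comp {Ω E E' : Type*} {m₀ : MeasurableSpace Ω} {μ : Measure Ω}
    [IsFiniteMeasure μ] [NormedAddCommGroup E] [NormedAddCommGroup E'] {f : E → E'} {K : NNReal}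
    (hf : LipschitzWith K f) {X : Ω → E} {p : ENNReal} (hX : MemLp X p μ) :
    MemLp (fun ω => f (X ω)) p μ := by
  convert ((hf.sub (LipschitzWith.const (f 0))).comp_memLp (sub_self _) hX).add
    (memLp_const (f 0)) using 1
  ext ω
  simp

section Expectation

variable {Ω E : Type*} {m m₀ : MeasurableSpace Ω} {μ : Measure Ω}
  [NormedAddCommGroup E] [InnerProductSpace ℝ E]

theorem integrable_inner_of_memLp_two {X Y : Ω → E} (hX : MemLp X 2 μ) (hY : MemLp Y 2 μ) :
    Integrable (fun ω => ⟪X ω, Y ω⟫) μ :=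
  memLp_one_iff_integrable.1 ((innerSL ℝ).memLp_of_bilin 1 hX hY)

theorem integral_inner_eq_of_condExp_ae_eq [CompleteSpace E] (hm : m ≤ m₀)
    [SigmaFinite (μ.trim hm)] {X V G : Ω → E} (hX : StronglyMeasurable[m] X)
    (hXV : Integrable (fun ω => ⟪X ω, V ω⟫) μ) (hV : Integrable V μ) (hVG : μ[V|m] =ᵐ[μ] G) :
    ∫ ω, ⟪X ω, V ω⟫ ∂μ = ∫ ω, ⟪X ω, G ω⟫ ∂μ := by
  rw [← integral_condExp hm]
  refine integral_congr_ae ?_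
  filter_upwards [condExp_bilin_of_stronglyMeasurable_left (innerSL ℝ) hX hXV hV, hVG]
    with ω hpull hω
  exact hpull.trans (congrArg _ hω)

end Expectation

section SGDStep

variable {Ω E : Type*} {m m₀ : MeasurableSpace Ω} {μ : Measure Ω} [IsFiniteMeasure μ]
  [NormedAddCommGroup E] [InnerProductSpace ℝ E] [CompleteSpace E] {F : E → ℝ} {L : ℝ}
  {X X' Y V : Ω → E} {α : ℝ}

theorem integral_comp_sgd_step_le (hF : Differentiable ℝ F)
    (hFL : ∀ x y, ‖gradient F x - gradient F y‖ ≤ L * ‖x - y‖)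
    (hX' : ∀ ω, X' ω = X ω - α • V ω) (hX2 : MemLp X 2 μ) (hV2 : MemLp V 2 μ)
    (hFX : Integrable (fun ω => F (X ω)) μ) (hFX' : Integrable (fun ω => F (X' ω)) μ) :
    ∫ ω, F (X' ω) ∂μ ≤ ∫ ω, F (X ω) ∂μ - α * ∫ ω, ⟪gradient F (X ω), V ω⟫ ∂μ
      + L / 2 * α ^ 2 * ∫ ω, ‖V ω‖ ^ 2 ∂μ := by
  have hinner := integrable_inner_of_memLp_two
    ((LipschitzWith.of_dist_le' (by simpa [dist_eq_norm] using hFL)).memLp_comp hX2) hV2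
  have hV : Integrable (fun ω => ‖V ω‖ ^ 2) μ := hV2.integrable_norm_pow two_ne_zero
  have hA : Integrable (fun ω => F (X ω) - α * ⟪gradient F (X ω), V ω⟫) μ :=
    hFX.sub (hinner.const_mul α)
  have hB : Integrable (fun ω => L / 2 * α ^ 2 * ‖V ω‖ ^ 2) μ := hV.const_mul _
  have hmono := integral_mono hFX' (hA.add hB) fun ω => by
    have h := quadratic_upper_bound_of_lipschitz_gradient hF hFL (X ω) (X' ω)
    rw [hX', sub_sub_cancel_left, inner_neg_right, real_inner_smul_right, norm_neg, norm_smul,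
      Real.norm_eq_abs, mul_pow, sq_abs] at h
    simp only [Pi.add_apply, hX']
    linarith
  rwa [integral_add' hA hB, integral_sub hFX (hinner.const_mul α), integral_const_mul,
    integral_const_mul] at hmono

theorem mul_integral_norm_sq_gradient_le_of_sgd_step (hL : 0 ≤ L) (hF : Differentiable ℝ F)
    (hFL : ∀ x y, ‖gradient F x - gradient F y‖ ≤ L * ‖x - y‖) (hm : m ≤ m₀) (hα : 0 ≤ α)
    {M : ℝ} (hX : StronglyMeasurable[m] X) (hX' : ∀ ω, X' ω = X ω - α • V ω)
    (hX2 : MemLp X 2 μ) (hY2 : MemLp Y 2 μ) (hV2 : MemLp V 2 μ)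
    (hFX : Integrable (fun ω => F (X ω)) μ) (hFX' : Integrable (fun ω => F (X' ω)) μ)
    (hVY : μ[V|m] =ᵐ[μ] fun ω => gradient F (Y ω)) (hM : ∫ ω, ‖V ω‖ ^ 2 ∂μ ≤ M)
    {K : ℝ} (hYX : ∫ ω, ‖Y ω - X ω‖ ^ 2 ∂μ ≤ K * α) :
    α * ∫ ω, ‖gradient F (Y ω)‖ ^ 2 ∂μ ≤ 2 * (∫ ω, F (X ω) ∂μ - ∫ ω, F (X' ω) ∂μ)
      + (L * M + L ^ 2 * K) * α ^ 2 := by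
  have hlip := LipschitzWith.of_dist_le' (f := gradient F) (K := L)
    (by simpa [dist_eq_norm] using hFL)
  have hgX := hlip.memLp_comp hX2
  have hgY := hlip.memLp_comp hY2
  have hdesc := integral_comp_sgd_step_le hF hFL hX' hX2 hV2 hFX hFX'
  have hcond : ∫ ω, ⟪gradient F (X ω), V ω⟫ ∂μ = ∫ ω, ⟪gradient F (X ω), gradient F (Y ω)⟫ ∂μ :=
    integral_inner_eq_of_condExp_ae_eq hm (hlip.continuous.comp_stronglyMeasurable hX)
      (integrable_inner_of_memLp_two hgX hV2) (hV2.integrable one_le_two) hVY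
  have hgY2 : Integrable (fun ω => ‖gradient F (Y ω)‖ ^ 2) μ :=
    hgY.integrable_norm_pow two_ne_zero
  have hYX2 : Integrable (fun ω => ‖Y ω - X ω‖ ^ 2) μ :=
    (hY2.sub hX2).integrable_norm_pow two_ne_zero
  have hlower := integral_mono ((hgY2.div_const 2).sub (hYX2.const_mul (L ^ 2 / 2)))
    (integrable_inner_of_memLp_two hgX hgY) fun ω =>
      half_sq_sub_le_inner_gradient hFL (X ω) (Y ω)
  rw [integral_sub' (hgY2.div_const 2) (hYX2.const_mul _), integral_div, integral_const_mul]
    at hlower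
  have hVM := mul_le_mul_of_nonneg_left hM (by positivity : 0 ≤ L / 2 * α ^ 2)
  have := mul_le_mul_of_nonneg_left hlower hα
  have := mul_le_mul_of_nonneg_left hYX (by positivity : 0 ≤ L ^ 2 / 2 * α)
  rw [hcond] at hdesc
  linarith

end SGDStep

theorem norm_sq_add_sub_le_of_compressor {E : Type*} [SeminormedAddCommGroup E] {C : E → E}
    {κ ρ lam : ℝ} (hC : ∀ x, ‖C x - x‖ ≤ κ * ‖x‖) (hκ : 0 ≤ κ) (hlam : 0 < lam) {e v c : E}
    (hc : ‖C (e + v) - c‖ ≤ ρ * ‖v‖) :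
    ‖e + v - c‖ ^ 2 ≤ (1 + lam) * κ ^ 2 * ‖e‖ ^ 2 + (1 + lam⁻¹) * (κ + ρ) ^ 2 * ‖v‖ ^ 2 := by
  have hnorm : ‖e + v - c‖ ≤ κ * ‖e‖ + (κ + ρ) * ‖v‖ := calc
    ‖e + v - c‖ = ‖-(C (e + v) - (e + v)) + (C (e + v) - c)‖ := by congr 1; abel
    _ ≤ κ * ‖e + v‖ + ρ * ‖v‖ := by
      grw [norm_add_le, norm_neg, hC, hc]
    _ ≤ κ * ‖e‖ + (κ + ρ) * ‖v‖ := by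
      nlinarith [mul_le_mul_of_nonneg_left (norm_add_le e v) hκ]
  calc ‖e + v - c‖ ^ 2 ≤ (κ * ‖e‖ + (κ + ρ) * ‖v‖) ^ 2 :=
        pow_le_pow_left₀ (norm_nonneg _) hnorm 2
    _ ≤ _ := by
      have := add_sq_le_peter_paul hlam (κ * ‖e‖) ((κ + ρ) * ‖v‖)
      linarith [mul_pow κ ‖e‖ 2, mul_pow (κ + ρ) ‖v‖ 2]

section ErrorFeedback

variable {Ω ι E : Type*} [Fintype ι] [AddCommGroup E] [Module ℝ E] {p : ι → ℝ} {C : E → E}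
  {α : ℕ → ℝ} {g a ε : ℕ → ι → Ω → E} {w wtil : ℕ → Ω → E}

theorem sum_smul_input_succ (ha : ∀ s q ω, a (s + 1) q ω = ε s q ω + α s • g s q ω)
    (s : ℕ) (ω : Ω) :
    ∑ q, p q • a (s + 1) q ω = ∑ q, p q • ε s q ω + α s • ∑ q, p q • g s q ω := by
  simp only [ha, smul_add, sum_add_distrib, smul_sum, smul_comm (p _) (α s)]

theorem sum_smul_error_succ (hε : ∀ s q ω, ε (s + 1) q ω = a (s + 1) q ω - C (a (s + 1) q ω))
    (s : ℕ) (ω : Ω) :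
    ∑ q, p q • ε (s + 1) q ω = ∑ q, p q • a (s + 1) q ω - ∑ q, p q • C (a (s + 1) q ω) := by
  simp only [hε, smul_sub, sum_sub_distrib]

theorem virtual_iterate_succ (ha : ∀ s q ω, a (s + 1) q ω = ε s q ω + α s • g s q ω)
    (hε : ∀ s q ω, ε (s + 1) q ω = a (s + 1) q ω - C (a (s + 1) q ω))
    (hw : ∀ s ω, w (s + 1) ω = w s ω - ∑ q, p q • C (a (s + 1) q ω))
    (hwtil : ∀ s ω, wtil s ω = w s ω - ∑ q, p q • ε s q ω) (s : ℕ) (ω : Ω) :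
    wtil (s + 1) ω = wtil s ω - α s • ∑ q, p q • g s q ω := by
  rw [hwtil, hw, sum_smul_error_succ hε, sum_smul_input_succ ha, hwtil]
  abel

end ErrorFeedback

theorem norm_sq_sum_smul_error_succ_le {Ω ι E : Type*} [Fintype ι] [NormedAddCommGroup E]
    [NormedSpace ℝ E] {p : ι → ℝ} {C : E → E} {α : ℕ → ℝ} {g a ε : ℕ → ι → Ω → E}
    {κ ρ lam : ℝ} (ha : ∀ s q ω, a (s + 1) q ω = ε s q ω + α s • g s q ω)
    (hε : ∀ s q ω, ε (s + 1) q ω = a (s + 1) q ω - C (a (s + 1) q ω))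
    (hC : ∀ x, ‖C x - x‖ ≤ κ * ‖x‖) (hκ : 0 ≤ κ) (hlam : 0 < lam) {s : ℕ} {ω : Ω}
    (hgap : ‖C (∑ q, p q • a (s + 1) q ω) - ∑ q, p q • C (a (s + 1) q ω)‖ ≤
      ρ * ‖α s • ∑ q, p q • g s q ω‖) :
    ‖∑ q, p q • ε (s + 1) q ω‖ ^ 2 ≤ (1 + lam) * κ ^ 2 * ‖∑ q, p q • ε s q ω‖ ^ 2 +
      (1 + lam⁻¹) * (κ + ρ) ^ 2 * α s ^ 2 * ‖∑ q, p q • g s q ω‖ ^ 2 := by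
  rw [sum_smul_input_succ ha] at hgap
  rw [sum_smul_error_succ hε, sum_smul_input_succ ha]
  have h := norm_sq_add_sub_le_of_compressor hC hκ hlam hgap
  rwa [norm_smul, mul_pow, Real.norm_eq_abs, sq_abs, ← mul_assoc] at h

theorem mul_integral_norm_sq_le_of_recursion {Ω E : Type*} {m₀ : MeasurableSpace Ω}
    {μ : Measure Ω} [NormedAddCommGroup E] {e V : ℕ → Ω → E} {r K M : ℝ} {b : ℕ → ℝ}
    (hr : 0 ≤ r) (hK : 0 ≤ K) (hb : ∀ s, 0 ≤ b s) (he0 : ∀ ω, e 0 ω = 0)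
    (he : ∀ s, MemLp (e s) 2 μ) (hV : ∀ s, MemLp (V s) 2 μ) (hM : ∀ s, ∫ ω, ‖V s ω‖ ^ 2 ∂μ ≤ M)
    (hrec : ∀ᵐ ω ∂μ, ∀ s, ‖e (s + 1) ω‖ ^ 2 ≤ r * ‖e s ω‖ ^ 2 + K * b s * ‖V s ω‖ ^ 2)
    (t : ℕ) :
    r * ∫ ω, ‖e t ω‖ ^ 2 ∂μ ≤ K * M * ∑ i ∈ Icc 1 t, r ^ i * b (t - i) := by
  have hint : ∀ s, Integrable (fun ω => ‖e s ω‖ ^ 2) μ :=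
    fun s => (he s).integrable_norm_pow two_ne_zero
  refine mul_le_sum_Icc_of_le_mul_add (e := fun s => ∫ ω, ‖e s ω‖ ^ 2 ∂μ) hr
    (by simp [he0]) (fun s => ?_) t
  have hVs : Integrable (fun ω => ‖V s ω‖ ^ 2) μ := (hV s).integrable_norm_pow two_ne_zero
  have hmono := integral_mono_ae (hint (s + 1)) (((hint s).const_mul r).add (hVs.const_mul _))
    (hrec.mono fun ω hω => hω s)
  rw [integral_add' ((hint s).const_mul r) (hVs.const_mul _), integral_const_mul,
    integral_const_mul] at hmono
  nlinarith [mul_le_mul_of_nonneg_left (hM s) (mul_nonneg hK (hb s))]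

theorem integral_norm_sq_sum_smul_error_le {Ω ι E : Type*} [Fintype ι] [NormedAddCommGroup E]
    [NormedSpace ℝ E] {m₀ : MeasurableSpace Ω} {μ : Measure Ω} {p : ι → ℝ} {C : E → E}
    {α : ℕ → ℝ} {g a ε : ℕ → ι → Ω → E} {c ρ lam M D : ℝ}
    (ha : ∀ s q ω, a (s + 1) q ω = ε s q ω + α s • g s q ω)
    (hε : ∀ s q ω, ε (s + 1) q ω = a (s + 1) q ω - C (a (s + 1) q ω))
    (hε0 : ∀ q ω, ε 0 q ω = 0) (hC : ∀ x, ‖C x - x‖ ^ 2 ≤ c * ‖x‖ ^ 2) (hc : 0 < c)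
    (hgap : ∀ᵐ ω ∂μ, ∀ s, ‖C (∑ q, p q • a (s + 1) q ω) - ∑ q, p q • C (a (s + 1) q ω)‖ ≤
      ρ * ‖α s • ∑ q, p q • g s q ω‖)
    (he : ∀ s, MemLp (fun ω => ∑ q, p q • ε s q ω) 2 μ)
    (hG : ∀ s, MemLp (fun ω => ∑ q, p q • g s q ω) 2 μ)
    (hM : ∀ s, ∫ ω, ‖∑ q, p q • g s q ω‖ ^ 2 ∂μ ≤ M) (hα : ∀ s, 0 < α s) (hlam : 0 < lam)
    (hD : 0 ≤ D)
    (hstep : ∀ t, 1 ≤ t → (1 / c) * ∑ i ∈ Icc 1 t, ((1 + lam) * c) ^ i * α (t - i) ^ 2 / α t ≤ D)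
    (t : ℕ) :
    ∫ ω, ‖∑ q, p q • ε t q ω‖ ^ 2 ∂μ ≤ M * D * (√c + ρ) ^ 2 / lam * α t := by
  have hM0 : 0 ≤ M := (integral_nonneg fun _ => by positivity).trans (hM 0)
  have hrec : ∀ᵐ ω ∂μ, ∀ s, ‖∑ q, p q • ε (s + 1) q ω‖ ^ 2 ≤
      (1 + lam) * c * ‖∑ q, p q • ε s q ω‖ ^ 2 +
        (1 + lam⁻¹) * (√c + ρ) ^ 2 * α s ^ 2 * ‖∑ q, p q • g s q ω‖ ^ 2 := by
    filter_upwards [hgap] with ω hω s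
    simpa only [Real.sq_sqrt hc.le] using norm_sq_sum_smul_error_succ_le ha hε
      (fun x => le_sqrt_mul_of_sq_le_mul_sq (hC x) (norm_nonneg x)) (Real.sqrt_nonneg c) hlam
      (hω s)
  have h := mul_integral_norm_sq_le_of_recursion (e := fun s ω => ∑ q, p q • ε s q ω)
    (V := fun s ω => ∑ q, p q • g s q ω) (b := fun s => α s ^ 2) (by positivity)
    (by positivity) (fun s => sq_nonneg _) (by simp [hε0]) he hG hM hrec t
  refine le_of_mul_le_mul_left (h.trans ?_) (by positivity : 0 < (1 + lam) * c)
  calc _ ≤ (1 + lam⁻¹) * (√c + ρ) ^ 2 * M * (D * c * α t) :=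
        mul_le_mul_of_nonneg_left (sum_Icc_pow_mul_sq_le_of_step_condition hα hc hD hstep t)
          (by positivity)
    _ = _ := by field_simp; ring

theorem unidirectional_topK_sgd_convergence_general
    {d N : ℕ}
    {Ω : Type*} {m : MeasurableSpace Ω} (μ : Measure Ω) [IsProbabilityMeasure μ]
    (ℱ : Filtration ℕ m)
    (p : Fin N → ℝ) (α : ℕ → ℝ)
    (C : EuclideanSpace ℝ (Fin d) → EuclideanSpace ℝ (Fin d))
    (g : ℕ → Fin N → Ω → EuclideanSpace ℝ (Fin d))
    (w₀ : EuclideanSpace ℝ (Fin d))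
    (a ε : ℕ → Fin N → Ω → EuclideanSpace ℝ (Fin d))
    (w wtil : ℕ → Ω → EuclideanSpace ℝ (Fin d))
    -- the objective function
    (F : EuclideanSpace ℝ (Fin d) → ℝ) {L Fstar : ℝ} (hL : 0 < L)
    (hFdiff : Differentiable ℝ F)
    (hFlip : ∀ x y, ‖gradient F x - gradient F y‖ ≤ L * ‖x - y‖)
    (hFstar : ∀ x, Fstar ≤ F x)
    -- pathwise definition of the iterates
    (hε0 : ∀ q ω, ε 0 q ω = 0) (hw0 : ∀ ω, w 0 ω = w₀)
    (ha : ∀ s q ω, a (s + 1) q ω = ε s q ω + α s • g s q ω)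
    (hε : ∀ s q ω, ε (s + 1) q ω = a (s + 1) q ω - C (a (s + 1) q ω))
    (hw : ∀ s ω, w (s + 1) ω = w s ω - ∑ q, p q • C (a (s + 1) q ω))
    (hwtil : ∀ s ω, wtil s ω = w s ω - ∑ q, p q • ε s q ω)
    -- measurability and square-integrability of the iterates
    (hadapt_wtil : ∀ s, StronglyMeasurable[ℱ s] (wtil s))
    (hsq_w : ∀ s, MemLp (w s) 2 μ) (hsq_wtil : ∀ s, MemLp (wtil s) 2 μ)
    (hsq_g : ∀ s q, MemLp (g s q) 2 μ)
    (hint_F : ∀ s, Integrable (fun ω => F (wtil s ω)) μ)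
    -- (i) γ-approximate compressor
    {γ : ℝ} (hγ1 : γ < 1)
    (hC : ∀ x, ‖C x - x‖ ^ 2 ≤ (1 - γ) * ‖x‖ ^ 2)
    -- (ii) a.s. gap assumption
    {ρhat : ℝ}
    (hgap : ∀ᵐ ω ∂μ, ∀ s, ‖C (∑ q, p q • a (s + 1) q ω) -
        ∑ q, p q • C (a (s + 1) q ω)‖ ≤ ρhat * ‖α s • ∑ q, p q • g s q ω‖)
    -- (iii) unbiasedness and second-moment bound
    {M : ℝ}
    (hunbiased : ∀ s,
      μ[fun ω => ∑ q, p q • g s q ω | ℱ s] =ᵐ[μ] fun ω => gradient F (w s ω))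
    (hM : ∀ s, ∫ ω, ‖∑ q, p q • g s q ω‖ ^ 2 ∂μ ≤ M)
    -- (iv) step-size condition
    (hα : ∀ s, 0 < α s) {lam D : ℝ} (hlam : 0 < lam) (hD : 0 < D)
    (hstep : ∀ t : ℕ, 1 ≤ t →
      (1 / (1 - γ)) * ∑ i ∈ Icc 1 t, ((1 + lam) * (1 - γ)) ^ i * (α (t - i)) ^ 2 / α t ≤ D) :
    ∀ T : ℕ,
      (1 / ∑ t ∈ range (T + 1), α t) *
          ∑ t ∈ range (T + 1), α t * ∫ ω, ‖gradient F (w t ω)‖ ^ 2 ∂μ ≤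
        (2 / ∑ t ∈ range (T + 1), α t) * (F w₀ - Fstar) +
          (L * M + L ^ 2 * M * D * (Real.sqrt (1 - γ) + ρhat) ^ 2 / lam) *
            ((∑ t ∈ range (T + 1), (α t) ^ 2) / ∑ t ∈ range (T + 1), α t) := by
  have hγ : 0 < 1 - γ := sub_pos.2 hγ1
  have hG : ∀ s, MemLp (fun ω => ∑ q, p q • g s q ω) 2 μ := fun s =>
    memLp_finsetSum _ fun q _ => (hsq_g s q).const_smul (p q)
  have hw_sub : ∀ s ω, w s ω - wtil s ω = ∑ q, p q • ε s q ω := fun s ω => by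
    rw [hwtil, sub_sub_cancel]
  have he : ∀ s, MemLp (fun ω => ∑ q, p q • ε s q ω) 2 μ := fun s => by
    rw [show (fun ω => ∑ q, p q • ε s q ω) = w s - wtil s from
      funext fun ω => (hw_sub s ω).symm]
    exact (hsq_w s).sub (hsq_wtil s)
  have herr := integral_norm_sq_sum_smul_error_le ha hε hε0 hC hγ hgap he hG hM hα hlam hD.le hstep
  have hdesc := fun t => mul_integral_norm_sq_gradient_le_of_sgd_step hL.le hFdiff hFlip
    (ℱ.le t) (hα t).le (hadapt_wtil t) (virtual_iterate_succ ha hε hw hwtil t) (hsq_wtil t)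
    (hsq_w t) (hG t) (hint_F t) (hint_F (t + 1)) (hunbiased t) (hM t)
    (by simpa only [hw_sub] using herr t)
  intro T
  have hφ0 : ∫ ω, F (wtil 0 ω) ∂μ = F w₀ := by simp [hwtil, hw0, hε0]
  rw [← hφ0]
  exact weighted_average_le_of_descent
    (B := L * M + L ^ 2 * M * D * (√(1 - γ) + ρhat) ^ 2 / lam) (fun t => (hα t).le)
    (fun t => by simpa using integral_mono (integrable_const Fstar) (hint_F t) fun ω => hFstar _)
    (fun t => (hdesc t).trans_eq (by ring)) (T + 1)

/-- Remark after Theorem 1: non-convex convergence of unidirectional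
top-K SGD. -/
theorem unidirectional_topK_sgd_convergence
    {d N : ℕ} (hd : 1 ≤ d) (hN : 1 ≤ N)
    {Ω : Type*} {m : MeasurableSpace Ω} (μ : Measure Ω) [IsProbabilityMeasure μ]
    (ℱ : Filtration ℕ m)
    (p : Fin N → ℝ) (α : ℕ → ℝ)
    (C : EuclideanSpace ℝ (Fin d) → EuclideanSpace ℝ (Fin d))
    (g : ℕ → Fin N → Ω → EuclideanSpace ℝ (Fin d))
    (w₀ : EuclideanSpace ℝ (Fin d))
    (a ε : ℕ → Fin N → Ω → EuclideanSpace ℝ (Fin d))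
    (w wtil : ℕ → Ω → EuclideanSpace ℝ (Fin d))
    -- the objective function
    (F : EuclideanSpace ℝ (Fin d) → ℝ) {L Fstar : ℝ} (hL : 0 < L)
    (hFdiff : Differentiable ℝ F)
    (hFlip : ∀ x y, ‖gradient F x - gradient F y‖ ≤ L * ‖x - y‖)
    (hFstar : ∀ x, Fstar ≤ F x)
    -- pathwise definition of the iterates
    (hε0 : ∀ q ω, ε 0 q ω = 0) (hw0 : ∀ ω, w 0 ω = w₀)
    (ha : ∀ s q ω, a (s + 1) q ω = ε s q ω + α s • g s q ω)
    (hε : ∀ s q ω, ε (s + 1) q ω = a (s + 1) q ω - C (a (s + 1) q ω))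
    (hw : ∀ s ω, w (s + 1) ω = w s ω - ∑ q, p q • C (a (s + 1) q ω))
    (hwtil : ∀ s ω, wtil s ω = w s ω - ∑ q, p q • ε s q ω)
    -- measurability and square-integrability of the iterates
    (hadapt_w : ∀ s, StronglyMeasurable[ℱ s] (w s))
    (hadapt_wtil : ∀ s, StronglyMeasurable[ℱ s] (wtil s))
    (hmeas_g : ∀ s q, Measurable (g s q))
    (hsq_w : ∀ s, MemLp (w s) 2 μ) (hsq_wtil : ∀ s, MemLp (wtil s) 2 μ)
    (hsq_g : ∀ s q, MemLp (g s q) 2 μ)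
    (hint_F : ∀ s, Integrable (fun ω => F (wtil s ω)) μ)
    (hint_grad : ∀ s, Integrable (fun ω => ‖gradient F (w s ω)‖ ^ 2) μ)
    -- (i) γ-approximate compressor
    {γ : ℝ} (hγ0 : 0 < γ) (hγ1 : γ < 1)
    (hC : ∀ x, ‖C x - x‖ ^ 2 ≤ (1 - γ) * ‖x‖ ^ 2)
    -- (ii) a.s. gap assumption
    {ρhat : ℝ} (hρhat : 0 < ρhat)
    (hgap : ∀ᵐ ω ∂μ, ∀ s, ‖C (∑ q, p q • a (s + 1) q ω) -
        ∑ q, p q • C (a (s + 1) q ω)‖ ≤ ρhat * ‖α s • ∑ q, p q • g s q ω‖)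
    -- (iii) unbiasedness and second-moment bound
    {M : ℝ}
    (hunbiased : ∀ s,
      μ[fun ω => ∑ q, p q • g s q ω | ℱ s] =ᵐ[μ] fun ω => gradient F (w s ω))
    (hM : ∀ s, ∫ ω, ‖∑ q, p q • g s q ω‖ ^ 2 ∂μ ≤ M)
    -- (iv) step-size condition
    (hα : ∀ s, 0 < α s) {lam D : ℝ} (hlam : 0 < lam) (hD : 0 < D)
    (hstep : ∀ t : ℕ, 1 ≤ t →
      (1 / (1 - γ)) * ∑ i ∈ Icc 1 t, ((1 + lam) * (1 - γ)) ^ i * (α (t - i)) ^ 2 / α t ≤ D) :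
    ∀ T : ℕ,
      (1 / ∑ t ∈ range (T + 1), α t) *
          ∑ t ∈ range (T + 1), α t * ∫ ω, ‖gradient F (w t ω)‖ ^ 2 ∂μ ≤
        (2 / ∑ t ∈ range (T + 1), α t) * (F w₀ - Fstar) +
          (L * M + L ^ 2 * M * D * (Real.sqrt (1 - γ) + ρhat) ^ 2 / lam) *
            ((∑ t ∈ range (T + 1), (α t) ^ 2) / ∑ t ∈ range (T + 1), α t) :=
  unidirectional_topK_sgd_convergence_general μ ℱ p α C g w₀ a ε w wtil F hL hFdiff hFlip hFstar hε0
    hw0 ha hε hw hwtil hadapt_wtil hsq_w hsq_wtil hsq_g hint_F hγ1 hC hgap hunbiased hM hα hlam hD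
    hstep
end
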